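/- arXiv:1402.1064 — 4 statements merged into one kernel-verified Lean document; each statement's English description precedes it below -/
import Mathlib

section
/- Let S_n (n ≥ 3) be the n×n circulant-like matrix with diagonal entries a, superdiagonal entries b, subdiagonal entries c, corner entries (S_n)_{1,n} = c and (S_n)_{n,1} = b, and all other entries 0. If x₁, x₂ are the roots of x² − a x + bc = 0, then det(S_n) = x₁^n + x₂^n + (−1)^{n+1}(b^n + c^n). -/
/-!
Let `P` be the permutation matrix of the cycle `i ↦ i + 1` on `Fin n`, so that the matrix is
`S = a + b P + c Pᵀ` and `Pᵀ P = 1`. Expanding along the first column leaves two triangular minors,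
so `det (x + t P) = xⁿ - (-t)ⁿ`. By Vieta, `(x₁ + b P) (x₂ + b P) = b (S P)`; taking determinants
and cancelling `bⁿ` gives the formula. When `b = 0`, `S` is the transpose of `a + c P` and
`{x₁, x₂} = {0, a}`.
-/

open Matrix Equiv

variable {R : Type*} [CommRing R]

lemma finRotate_eq_zero_iff {m : ℕ} {i : Fin (m + 1)} :
    finRotate (m + 1) i = 0 ↔ i = Fin.last m := by
  rw [← finRotate_last, (finRotate _).apply_eq_iff_eq]

lemma det_finRotate_permMatrix (m : ℕ) : ((finRotate (m + 1)).permMatrix R).det = (-1) ^ m := by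
  simp [sign_finRotate]

lemma transpose_finRotate_permMatrix_mul (n : ℕ) :
    ((finRotate n).permMatrix R)ᵀ * (finRotate n).permMatrix R = 1 := by
  rw [transpose_permMatrix, ← permMatrix_mul, mul_inv_cancel, permMatrix_one]

lemma det_smul_one_add_smul_finRotate_permMatrix (m : ℕ) (x t : R) :
    (x • (1 : Matrix (Fin (m + 1)) (Fin (m + 1)) R) + t • (finRotate (m + 1)).permMatrix R).det
      = x ^ (m + 1) - (-t) ^ (m + 1) := by
  set M := x • (1 : Matrix (Fin (m + 1)) (Fin (m + 1)) R) + t • (finRotate (m + 1)).permMatrix R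
  have hM : ∀ i j, M i j = (if i = j then x else 0) + if finRotate (m + 1) i = j then t else 0 := by
    intro i j
    simp [M, one_apply]
  have hM_val : ∀ i j : Fin (m + 1), M i j = (if (i : ℕ) = j then x else 0) +
      if (j : ℕ) = if (i : ℕ) = m then 0 else (i : ℕ) + 1 then t else 0 := by
    intro i j
    simp only [hM, Fin.ext_iff, coe_finRotate, Fin.val_last, eq_comm (b := (j : ℕ))]
  have hupper : (M.submatrix Fin.succ Fin.succ).det = x ^ m := by
    rw [det_of_isUpperTriangular]
    · rw [← Fin.prod_const]
      refine Finset.prod_congr rfl fun i _ => ?_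
      simp only [submatrix_apply, hM_val, Fin.val_succ]
      split_ifs <;> first | omega | contradiction | simp
    · intro i j hij
      have : (j : ℕ) < i := hij
      simp only [submatrix_apply, hM_val, Fin.val_succ]
      split_ifs <;> first | omega | contradiction | simp
  have hlower : (M.submatrix Fin.castSucc Fin.succ).det = t ^ m := by
    rw [det_of_isLowerTriangular]
    · rw [← Fin.prod_const]
      refine Finset.prod_congr rfl fun i _ => ?_
      simp only [submatrix_apply, hM_val, Fin.val_succ, Fin.val_castSucc]
      split_ifs <;> first | omega | contradiction | simp
    · intro i j hij
      have : (i : ℕ) < j := hij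
      simp only [submatrix_apply, hM_val, Fin.val_succ, Fin.val_castSucc]
      split_ifs <;> first | omega | contradiction | simp
  rw [det_succ_column_zero]
  simp only [hM, mul_add, add_mul, Finset.sum_add_distrib, mul_ite, mul_zero, ite_mul, zero_mul,
    finRotate_eq_zero_iff, Finset.sum_ite_eq', Finset.mem_univ, if_true, Fin.succAbove_zero,
    Fin.succAbove_last, hupper, hlower, Fin.val_zero, pow_zero, one_mul, Fin.val_last]
  ring

lemma smul_one_add_smul_mul_eq_of_vieta {A : Type*} [Ring A] [Algebra R A]
    {a b c x₁ x₂ : R} (hsum : x₁ + x₂ = a) (hprod : x₁ * x₂ = b * c) {P Q : A} (hQP : Q * P = 1) :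
    (x₁ • 1 + b • P) * (x₂ • 1 + b • P) = b • ((a • 1 + b • P + c • Q) * P) := by
  simp only [add_mul, mul_add, smul_mul_assoc, mul_smul_comm, one_mul, mul_one, hQP, smul_add]
  subst hsum
  linear_combination (norm := module) hprod • (1 : A)

theorem det_cyclic_tridiagonal [IsDomain R] (m : ℕ) {a b c x₁ x₂ : R}
    (hsum : x₁ + x₂ = a) (hprod : x₁ * x₂ = b * c) :
    (a • 1 + b • (finRotate (m + 1)).permMatrix R + c • ((finRotate (m + 1)).permMatrix R)ᵀ).det
      = x₁ ^ (m + 1) + x₂ ^ (m + 1) + (-1) ^ (m + 1 + 1) * (b ^ (m + 1) + c ^ (m + 1)) := by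
  set P := (finRotate (m + 1)).permMatrix R
  rcases eq_or_ne b 0 with rfl | hb
  · have hx : x₁ ^ (m + 1) + x₂ ^ (m + 1) = a ^ (m + 1) := by
      rcases mul_eq_zero.mp (hprod.trans (zero_mul c)) with rfl | rfl <;> simp [← hsum]
    rw [zero_smul, add_zero, hx, ← det_transpose, transpose_add, transpose_smul, transpose_smul,
      transpose_one, transpose_transpose, det_smul_one_add_smul_finRotate_permMatrix]
    ring
  · set D := (a • 1 + b • P + c • Pᵀ).det
    have hdet := congrArg det (smul_one_add_smul_mul_eq_of_vieta hsum hprod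
      (transpose_finRotate_permMatrix_mul (R := R) (m + 1)))
    simp only [det_mul, det_smul, det_smul_one_add_smul_finRotate_permMatrix,
      det_finRotate_permMatrix, Fintype.card_fin] at hdet
    have hpow : x₁ ^ (m + 1) * x₂ ^ (m + 1) = b ^ (m + 1) * c ^ (m + 1) := by
      rw [← mul_pow, hprod, mul_pow]
    have hsq : ((-1 : R) ^ m) ^ 2 = 1 := by rw [← pow_mul, pow_mul', neg_one_sq, one_pow]
    refine mul_left_cancel₀ (pow_ne_zero (m + 1) hb) ?_
    linear_combination (-(-1) ^ m) * hdet + (-1) ^ m * hpow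
      - (b ^ (m + 1) * (D - x₁ ^ (m + 1) - x₂ ^ (m + 1)) - (-1) ^ m * b ^ (2 * (m + 1))) * hsq

lemma of_cyclic_tridiagonal_eq (m : ℕ) (hm : 2 ≤ m) (a b c : R) :
    (Matrix.of fun i j : Fin (m + 1) =>
        if (i : ℕ) = (j : ℕ) then a
        else if (j : ℕ) = (i : ℕ) + 1 then b
        else if (i : ℕ) = (j : ℕ) + 1 then c
        else if (i : ℕ) = 0 ∧ (j : ℕ) = m + 1 - 1 then c
        else if (i : ℕ) = m + 1 - 1 ∧ (j : ℕ) = 0 then b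
        else 0)
      = a • 1 + b • (finRotate (m + 1)).permMatrix R + c • ((finRotate (m + 1)).permMatrix R)ᵀ := by
  ext i j
  have hi := i.isLt
  have hj := j.isLt
  simp only [of_apply, Matrix.add_apply, Matrix.smul_apply, one_apply, transpose_apply,
    PEquiv.toMatrix_apply, toPEquiv_apply, Option.mem_def, Option.some.injEq, Fin.ext_iff,
    coe_finRotate, Fin.val_last, smul_eq_mul]
  split_ifs <;> first | omega | simp

/-- Determinant of the circulant-like matrix `S_n` (n ≥ 3) with diagonal `a`,
superdiagonal `b`, subdiagonal `c`, and corner entries `(S_n)_{1,n} = c`, `(S_n)_{n,1} = b`: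
if `x₁, x₂` are the roots of `x² - a x + b c = 0` then
`det S_n = x₁^n + x₂^n + (-1)^{n+1}(b^n + c^n)`. -/
theorem stmt2 (n : ℕ) (hn : 3 ≤ n) (a b c x1 x2 : ℂ)
    (hsum : x1 + x2 = a) (hprod : x1 * x2 = b * c) :
    (Matrix.of fun i j : Fin n =>
        if (i : ℕ) = (j : ℕ) then a
        else if (j : ℕ) = (i : ℕ) + 1 then b
        else if (i : ℕ) = (j : ℕ) + 1 then c
        else if (i : ℕ) = 0 ∧ (j : ℕ) = n - 1 then c
        else if (i : ℕ) = n - 1 ∧ (j : ℕ) = 0 then b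
        else 0).det
      = x1 ^ n + x2 ^ n + (-1 : ℂ) ^ (n + 1) * (b ^ n + c ^ n) := by
  obtain ⟨m, rfl⟩ : ∃ m, n = m + 1 := ⟨n - 1, by omega⟩
  rw [of_cyclic_tridiagonal_eq m (by omega)]
  exact det_cyclic_tridiagonal m hsum hprod
end

section
/- Let V be an n×n matrix and α a scalar. Then ∑_{A ⊆ {1,…,n}} (−α)^{|A|} (∏_{j∈A} V_{jj}) · Per_α(V restricted to A^c × A^c) = Per⁰_α(V), where Per⁰_α(V) = ∑_{σ ∈ S_n, σ has no fixed points} α^{m(σ)} ∏_i V_{iσ(i)}. -/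
/-!
Extending a permutation of `Aᶜ` by the identity on `A` adds `|A|` one-cycles, so
`α^|A| (∏_{j ∈ A} V_jj) Per_α(V|_{Aᶜ×Aᶜ})` is the sum of `α^{m(σ)} ∏_i V_{iσ(i)}` over the
permutations `σ` fixing `A` pointwise. Exchanging the two sums, `σ` is weighted by
`∑_{A ⊆ Fix σ} (-1)^|A|`, which is `1` if `σ` is fixed-point free and `0` otherwise.
-/

open Matrix Finset Equiv

/-- The number of cycles of a permutation, counting fixed points as cycles of length one. -/
noncomputable def numCycles {β : Type*} [Fintype β] [DecidableEq β] (σ : Equiv.Perm β) : ℕ :=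
  σ.cycleType.card + (Finset.univ.filter fun x => σ x = x).card

/-- The `α`-permanent `Per_α(A) = ∑_{σ} α^{m(σ)} ∏_i A_{i σ(i)}`. -/
noncomputable def perAlpha {β : Type*} [Fintype β] [DecidableEq β] (α : ℂ)
    (A : Matrix β β ℂ) : ℂ :=
  ∑ σ : Equiv.Perm β, α ^ numCycles σ * ∏ i, A i (σ i)

section
variable {β : Type*} [Fintype β] [DecidableEq β]

theorem card_fixedPoints_ofSubtype {p : β → Prop} [DecidablePred p] [Fintype (Subtype p)]
    (τ : Perm (Subtype p)) :
    #{x | Perm.ofSubtype τ x = x} = #{x | τ x = x} + #{x | ¬p x} := by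
  -- `Perm.support_ofSubtype` is stated for the instance `Subtype.fintype p`
  obtain rfl : ‹Fintype (Subtype p)› = Subtype.fintype p := Subsingleton.elim _ _
  have hβ := card_filter_add_card_filter_not (s := univ) fun x => Perm.ofSubtype τ x = x
  have hp := card_filter_add_card_filter_not (s := univ) fun x => τ x = x
  have hsplit := card_filter_add_card_filter_not (s := (univ : Finset β)) fun x => p x
  have hsupp : #{x | ¬Perm.ofSubtype τ x = x} = #{x | ¬τ x = x} := by
    simpa only [Perm.support, card_map, ne_eq] using congrArg card (Perm.support_ofSubtype τ)
  rw [card_univ] at hβ hp hsplit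
  rw [Fintype.card_subtype] at hp
  omega

theorem numCycles_ofSubtype {p : β → Prop} [DecidablePred p] [Fintype (Subtype p)]
    (τ : Perm (Subtype p)) :
    numCycles (Perm.ofSubtype τ) = numCycles τ + #{x | ¬p x} := by
  rw [numCycles, numCycles, Perm.cycleType_ofSubtype, card_fixedPoints_ofSubtype, add_assoc]

theorem sum_powerset_filter_neg_one_pow_card {R : Type*} [Ring R] (P : β → Prop)
    [DecidablePred P] :
    ∑ A ∈ (univ : Finset β).powerset with ∀ a ∈ A, P a, (-1 : R) ^ #A =
      if ∀ a, ¬P a then 1 else 0 := by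
  have hfilter :
      {A ∈ (univ : Finset β).powerset | ∀ a ∈ A, P a} = (univ.filter P).powerset := by
    ext A
    simp [subset_iff]
  have hempty : univ.filter P = ∅ ↔ ∀ a, ¬P a := by simp [filter_eq_empty_iff]
  rw [hfilter, if_congr hempty.symm rfl rfl]
  exact_mod_cast congrArg (Int.cast : ℤ → R) sum_powerset_neg_one_pow_card

theorem pow_mul_prod_diag_mul_perAlpha_submatrix_compl (α : ℂ) (V : Matrix β β ℂ)
    (s : Finset β) :
    α ^ #s * (∏ j ∈ s, V j j) *
        perAlpha α (V.submatrix (Subtype.val : {x // x ∈ sᶜ} → β) Subtype.val) =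
      ∑ σ : Perm β with ∀ a ∈ s, σ a = a, α ^ numCycles σ * ∏ i, V i (σ i) := by
  rw [perAlpha, mul_sum, Finset.sum_subtype _ (p := fun σ : Perm β => ∀ a, ¬a ∈ sᶜ → σ a = a)
    (by simp), ← (Perm.subtypeEquivSubtypePerm _).sum_comp]
  refine Fintype.sum_congr _ _ fun τ => ?_
  have hcompl : #{x | ¬x ∈ sᶜ} = #s := by simp
  have hprod : ∏ i, V i (Perm.ofSubtype τ i) =
      (∏ j ∈ s, V j j) * ∏ i : {x // x ∈ sᶜ}, V i (τ i) := by
    rw [← prod_mul_prod_compl s, prod_subtype sᶜ (fun _ => Iff.rfl)]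
    congr 1
    · exact prod_congr rfl fun j hj => by rw [Perm.ofSubtype_apply_of_not_mem τ (by simpa)]
    · exact prod_congr rfl fun i _ => by rw [Perm.ofSubtype_apply_of_mem τ i.2]
  simp only [Perm.subtypeEquivSubtypePerm_apply_coe, numCycles_ofSubtype, hcompl, hprod,
    submatrix_apply]
  ring

theorem sum_powerset_neg_pow_mul_perAlpha_submatrix_compl (α : ℂ) (V : Matrix β β ℂ) :
    ∑ A ∈ (univ : Finset β).powerset, (-α) ^ #A * (∏ j ∈ A, V j j) *
        perAlpha α (V.submatrix (Subtype.val : {x // x ∈ Aᶜ} → β) Subtype.val) =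
      ∑ σ : Perm β with ∀ i, σ i ≠ i, α ^ numCycles σ * ∏ i, V i (σ i) := by
  calc _ = ∑ A ∈ (univ : Finset β).powerset, (-1 : ℂ) ^ #A *
          ∑ σ : Perm β with ∀ a ∈ A, σ a = a, α ^ numCycles σ * ∏ i, V i (σ i) := by
        refine sum_congr rfl fun A _ => ?_
        rw [← pow_mul_prod_diag_mul_perAlpha_submatrix_compl]
        ring
    _ = ∑ σ : Perm β,
          (∑ A ∈ (univ : Finset β).powerset with ∀ a ∈ A, σ a = a, (-1 : ℂ) ^ #A) *
            (α ^ numCycles σ * ∏ i, V i (σ i)) := by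
        simp only [mul_sum, sum_mul]
        exact sum_comm' fun A σ => by simp
    _ = ∑ σ : Perm β,
          (if ∀ i, ¬σ i = i then 1 else 0) * (α ^ numCycles σ * ∏ i, V i (σ i)) := by
        simp only [sum_powerset_filter_neg_one_pow_card]
    _ = _ := by simp only [ite_mul, one_mul, zero_mul, ← sum_filter, ne_eq]

end

/-- `∑_{A ⊆ {1,…,n}} (-α)^{|A|} (∏_{j∈A} V_{jj}) Per_α(V|_{A^c × A^c}) = Per⁰_α(V)`,
where `Per⁰_α` sums only over fixed-point-free permutations. -/
theorem stmt4 (n : ℕ) (α : ℂ) (V : Matrix (Fin n) (Fin n) ℂ) :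
    ∑ A ∈ (Finset.univ : Finset (Fin n)).powerset,
      (-α) ^ A.card * (∏ j ∈ A, V j j) *
        perAlpha α (V.submatrix (Subtype.val : {x // x ∈ Aᶜ} → Fin n)
          (Subtype.val : {x // x ∈ Aᶜ} → Fin n))
      = ∑ σ ∈ Finset.univ.filter (fun σ : Equiv.Perm (Fin n) => ∀ i, σ i ≠ i),
          α ^ numCycles σ * ∏ i, V i (σ i) := by
  -- `convert`: over `Fin n`, `∀ i, _` is decided by `Nat.decidableForallFin`, not the generic instance
  convert sum_powerset_neg_pow_mul_perAlpha_submatrix_compl α V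
end

section
/- Let γ be a Gamma random variable with shape α > 0 and scale V > 0 (density x^{α−1} e^{−x/V}/(Γ(α) V^α) on (0,∞)). Then E[(1 − e^{−γ/V})^{−1}] = ∑_{k≥1} k^{−α} = ζ(α) for α > 1. -/
open MeasureTheory Real

/-!
Expand `(1 - e^{-x/V})⁻¹ = ∑_{k ≥ 0} e^{-(k/V) x}` as a geometric series. Against the Gamma
density each term integrates to the Laplace transform `(1 + (k/V) V)^{-α} = (k + 1)^{-α}`, and
since all terms are nonnegative with summable integrals, sum and integral may be exchanged.
-/

lemma MeasureTheory.integral_tsum_of_nonneg {α ι : Type*} [MeasurableSpace α] {μ : Measure α}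
    [Countable ι] {F : ι → α → ℝ} (hF_nonneg : ∀ i, 0 ≤ᵐ[μ] F i)
    (hF_int : ∀ i, Integrable (F i) μ) (hF_sum : Summable fun i ↦ ∫ a, F i a ∂μ) :
    ∫ a, ∑' i, F i a ∂μ = ∑' i, ∫ a, F i a ∂μ := by
  refine (integral_tsum_of_summable_integral_norm hF_int (hF_sum.congr fun i ↦ ?_)).symm
  exact integral_congr_ae <| (hF_nonneg i).mono fun a ha ↦ (Real.norm_of_nonneg ha).symm

lemma hasSum_exp_neg_nat_mul {c : ℝ} (hc : 0 < c) :
    HasSum (fun k : ℕ ↦ exp (-(k * c))) (1 - exp (-c))⁻¹ := by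
  have h := hasSum_geometric_of_lt_one (exp_pos (-c)).le (exp_lt_one_iff.mpr (neg_lt_zero.mpr hc))
  refine h.congr_fun fun k ↦ ?_
  rw [← exp_nat_mul, mul_neg]

lemma summable_nat_add_one_rpow_neg {s : ℝ} (hs : 1 < s) :
    Summable fun k : ℕ ↦ ((k : ℝ) + 1) ^ (-s) := by
  have h := (summable_nat_add_iff 1).mpr (Real.summable_nat_rpow.mpr (neg_lt_neg hs))
  exact_mod_cast h

noncomputable def gammaDensity (α V x : ℝ) : ℝ := x ^ (α - 1) * exp (-x / V) / (Gamma α * V ^ α)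

section GammaDensity

variable {α V : ℝ}

lemma gammaDensity_nonneg (hα : 0 < α) (hV : 0 < V) {x : ℝ} (hx : 0 ≤ x) :
    0 ≤ gammaDensity α V x := by
  unfold gammaDensity
  have := Gamma_pos_of_pos hα
  positivity

lemma integral_exp_neg_mul_mul_gammaDensity (hα : 0 < α) (hV : 0 < V) {t : ℝ}
    (ht : 0 < 1 + t * V) :
    ∫ x in Set.Ioi 0, exp (-(t * x)) * gammaDensity α V x = (1 + t * V) ^ (-α) := by
  have hr : 0 < t + 1 / V := by
    rw [show t + 1 / V = (1 + t * V) / V by field_simp; ring]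
    positivity
  have hΓ := Gamma_pos_of_pos hα
  calc ∫ x in Set.Ioi 0, exp (-(t * x)) * gammaDensity α V x
      = (∫ x in Set.Ioi 0, x ^ (α - 1) * exp (-((t + 1 / V) * x))) / (Gamma α * V ^ α) := by
        rw [← integral_div]
        congr 1 with x
        rw [gammaDensity, add_mul, neg_add, exp_add]
        ring_nf
    _ = (1 / (t + 1 / V)) ^ α / V ^ α := by
        rw [integral_rpow_mul_exp_neg_mul_Ioi hα hr]
        field_simp
    _ = (1 + t * V) ^ (-α) := by
        rw [← div_rpow (by positivity) hV.le, rpow_neg (by positivity), ← inv_rpow ht.le]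
        congr 1
        rw [div_div, add_mul, one_div_mul_cancel hV.ne', one_div, add_comm]

lemma integrable_exp_neg_mul_mul_gammaDensity (hα : 0 < α) (hV : 0 < V) {t : ℝ}
    (ht : 0 < 1 + t * V) :
    IntegrableOn (fun x ↦ exp (-(t * x)) * gammaDensity α V x) (Set.Ioi 0) := by
  refine Integrable.of_integral_ne_zero ?_
  rw [integral_exp_neg_mul_mul_gammaDensity hα hV ht]
  exact (rpow_pos_of_pos ht _).ne'

end GammaDensity

/-- For a Gamma(α, V) random variable γ (density `x^{α-1} e^{-x/V}/(Γ(α) V^α)` on `(0,∞)`)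
with `α > 1`, `E[(1 - e^{-γ/V})⁻¹] = ∑_{k ≥ 1} k^{-α} = ζ(α)`. -/
theorem stmt10 (α V : ℝ) (hα : 1 < α) (hV : 0 < V) :
    ∫ x in Set.Ioi (0 : ℝ),
        (1 - Real.exp (-x / V))⁻¹ * (x ^ (α - 1) * Real.exp (-x / V) / (Real.Gamma α * V ^ α))
      = ∑' k : ℕ, ((k : ℝ) + 1) ^ (-α) := by
  have hα₀ : 0 < α := by linarith
  have hkV (k : ℕ) : 0 < 1 + k / V * V := by rw [div_mul_cancel₀ _ hV.ne']; positivity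
  have hterm (k : ℕ) :
      ∫ x in Set.Ioi 0, exp (-(k / V * x)) * gammaDensity α V x = ((k : ℝ) + 1) ^ (-α) := by
    rw [integral_exp_neg_mul_mul_gammaDensity hα₀ hV (hkV k), div_mul_cancel₀ _ hV.ne', add_comm]
  calc _ = ∫ x in Set.Ioi 0, ∑' k : ℕ, exp (-(k / V * x)) * gammaDensity α V x := by
        refine setIntegral_congr_fun measurableSet_Ioi fun x (hx : 0 < x) ↦ ?_
        simp_rw [tsum_mul_right, div_mul_eq_mul_div _ V x, mul_div_assoc _ x V,
          (hasSum_exp_neg_nat_mul (div_pos hx hV)).tsum_eq, gammaDensity, neg_div]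
    _ = ∑' k : ℕ, ∫ x in Set.Ioi 0, exp (-(k / V * x)) * gammaDensity α V x := by
        refine integral_tsum_of_nonneg (fun k ↦ ?_)
          (fun k ↦ integrable_exp_neg_mul_mul_gammaDensity hα₀ hV (hkV k)) ?_
        · filter_upwards [ae_restrict_mem measurableSet_Ioi] with x (hx : 0 < x)
          exact mul_nonneg (exp_pos _).le (gammaDensity_nonneg hα₀ hV hx.le)
        · simpa only [hterm] using summable_nat_add_one_rpow_neg hα
    _ = _ := tsum_congr hterm
end

section
/- Let K be an n×n substochastic matrix partitioned in blocks according to a partition {S₁,…,S_k} of {1,…,n}, with zero diagonal blocks, and let L' be the block-diagonal part of an invertible matrix L (generator), with V = (−L)^{−1}. If each block −L|_{S_i×S_i} is invertible with inverse V^{S_i}, and H_{i,j} = V^{S_i} L|_{S_i×S_j} for i ≠ j, then det(−L')⁻¹ det(−L) = det(I − K), where K is the block matrix with off-diagonal blocks H_{i,j} and zero diagonal blocks. -/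
/-!
On the diagonal blocks `-L'` agrees with `-L`, so `(-L')⁻¹` is block diagonal with the
inverses of those blocks, and `(-L')⁻¹ (-L)` has identity diagonal blocks and
off-diagonal blocks `-(-L')⁻¹ L`; that is, `(-L')⁻¹ (-L) = 1 - K`. Taking determinants
gives the identity. Block diagonality of the inverse comes from viewing a block diagonal
matrix as block triangular for both the order on the blocks and its dual.
-/

open Matrix

namespace Matrix

variable {m α R : Type*}

def IsBlockDiagonal [Zero R] (M : Matrix m m R) (b : m → α) : Prop :=
  ∀ ⦃i j⦄, b i ≠ b j → M i j = 0

namespace IsBlockDiagonal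

variable {b : m → α}

theorem blockTriangular [Zero R] [LinearOrder α] {M : Matrix m m R}
    (hM : M.IsBlockDiagonal b) : M.BlockTriangular b :=
  fun _ _ h => hM h.ne'

theorem blockTriangular_toDual [Zero R] [LinearOrder α] {M : Matrix m m R}
    (hM : M.IsBlockDiagonal b) : M.BlockTriangular (OrderDual.toDual ∘ b) :=
  fun _ _ h => hM (ne_of_lt h)

theorem inv [Fintype m] [DecidableEq m] [CommRing R] [LinearOrder α] {M : Matrix m m R}
    (hM : M.IsBlockDiagonal b) : M⁻¹.IsBlockDiagonal b := by
  by_cases hdet : IsUnit M.det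
  · have := M.invertibleOfIsUnitDet hdet
    intro i j hij
    rcases lt_or_gt_of_ne hij with h | h
    · exact blockTriangular_inv_of_blockTriangular hM.blockTriangular_toDual h
    · exact blockTriangular_inv_of_blockTriangular hM.blockTriangular h
  · intro i j _
    rw [nonsing_inv_apply_not_isUnit M hdet, zero_apply]

theorem mul_apply_eq_zero [Fintype m] [NonUnitalNonAssocSemiring R] {P N : Matrix m m R}
    (hP : P.IsBlockDiagonal b) (hN : ∀ ⦃i j⦄, b i = b j → N i j = 0) {x y : m}
    (hxy : b x = b y) : (P * N) x y = 0 := by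
  refine (mul_apply).trans (Finset.sum_eq_zero fun z _ => ?_)
  by_cases hxz : b x = b z
  · rw [hN (hxz.symm.trans hxy), mul_zero]
  · rw [hP hxz, zero_mul]

end IsBlockDiagonal

section BlockDiagonalPart

variable [DecidableEq α] [CommRing R] {b : m → α} {A A' : Matrix m m R}

theorem isBlockDiagonal_of_eq_ite (hA' : ∀ x y, A' x y = if b x = b y then A x y else 0) :
    A'.IsBlockDiagonal b :=
  fun x y h => by rw [hA', if_neg h]

theorem toSquareBlock_eq_of_eq_ite (hA' : ∀ x y, A' x y = if b x = b y then A x y else 0)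
    (a : α) : A'.toSquareBlock b a = A.toSquareBlock b a := by
  ext x y
  simp only [toSquareBlock_def, of_apply, hA', x.2, y.2, if_true]

theorem isUnit_det_of_eq_ite [Fintype m] [DecidableEq m] [LinearOrder α]
    (hA' : ∀ x y, A' x y = if b x = b y then A x y else 0)
    (hblocks : ∀ a, IsUnit (A.toSquareBlock b a).det) : IsUnit A'.det := by
  rw [(isBlockDiagonal_of_eq_ite hA').blockTriangular.det, IsUnit.prod_iff]
  exact fun a _ => toSquareBlock_eq_of_eq_ite hA' a ▸ hblocks a

theorem inv_mul_apply_of_eq_ite [Fintype m] [DecidableEq m] [LinearOrder α]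
    (hA' : ∀ x y, A' x y = if b x = b y then A x y else 0) (hunit : IsUnit A'.det)
    {x y : m} (hxy : b x = b y) : (A'⁻¹ * A) x y = (1 : Matrix m m R) x y := by
  have hoff : (A'⁻¹ * (A - A')) x y = 0 :=
    (isBlockDiagonal_of_eq_ite hA').inv.mul_apply_eq_zero
      (fun i j h => by rw [Matrix.sub_apply, hA', if_pos h, sub_self]) hxy
  rwa [mul_sub, nonsing_inv_mul A' hunit, Matrix.sub_apply, sub_eq_zero] at hoff

end BlockDiagonalPart

end Matrix

theorem stmt16_general {n k : ℕ} (π : Fin n → Fin k) (L : Matrix (Fin n) (Fin n) ℝ)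
    (L' : Matrix (Fin n) (Fin n) ℝ)
    (hL' : ∀ x y, L' x y = if π x = π y then L x y else 0)
    (hblocks : ∀ i : Fin k,
      IsUnit (((-L).submatrix (Subtype.val : {x // π x = i} → Fin n)
        (Subtype.val : {x // π x = i} → Fin n)).det))
    (K : Matrix (Fin n) (Fin n) ℝ)
    (hK : ∀ x y, K x y = if π x = π y then 0 else ((-L')⁻¹ * L) x y) :
    ((-L').det)⁻¹ * (-L).det = (1 - K).det := by
  have hneg : ∀ x y, (-L') x y = if π x = π y then (-L) x y else 0 := fun x y => by
    rw [neg_apply, neg_apply, hL', apply_ite Neg.neg, neg_zero]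
  have hunit : IsUnit (-L').det := isUnit_det_of_eq_ite hneg hblocks
  have hkey : (-L')⁻¹ * (-L) = 1 - K := by
    ext x y
    rw [Matrix.sub_apply, hK]
    split_ifs with hxy
    · rw [inv_mul_apply_of_eq_ite hneg hunit hxy, sub_zero]
    · rw [one_apply_ne fun h => hxy (congrArg π h), zero_sub, mul_neg, neg_apply]
  rw [← hkey, det_mul, det_nonsing_inv, Ring.inverse_eq_inv']

/-- Block determinant identity for the hitting-probability matrix: let `π` assign each
state to a block, `L'` the block-diagonal part of the invertible generator `L`, each
diagonal block of `-L` invertible, and `K` the matrix with zero diagonal blocks and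
off-diagonal blocks `H_{i,j} = V^{S_i} L|_{S_i × S_j}` (i.e. `K = (-L')⁻¹ L` off the
diagonal blocks). Then `det(-L')⁻¹ det(-L) = det(I - K)`. -/
theorem stmt16 {n k : ℕ} (π : Fin n → Fin k) (L : Matrix (Fin n) (Fin n) ℝ)
    (hL : IsUnit L.det)
    (L' : Matrix (Fin n) (Fin n) ℝ)
    (hL' : ∀ x y, L' x y = if π x = π y then L x y else 0)
    (hblocks : ∀ i : Fin k,
      IsUnit (((-L).submatrix (Subtype.val : {x // π x = i} → Fin n)
        (Subtype.val : {x // π x = i} → Fin n)).det))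
    (K : Matrix (Fin n) (Fin n) ℝ)
    (hK : ∀ x y, K x y = if π x = π y then 0 else ((-L')⁻¹ * L) x y) :
    ((-L').det)⁻¹ * (-L).det = (1 - K).det :=
  stmt16_general π L L' hL' hblocks K hK
end
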